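/- arXiv:2110.12137 — 3 statements merged into one kernel-verified Lean document; each statement's English description precedes it below -/
import Mathlib

section
/- The function A ↦ −log det A is strictly convex on the set of real symmetric positive definite n×n matrices: for distinct positive definite A, B and t ∈ (0,1), −log det(tA + (1−t)B) < −t·log det A − (1−t)·log det B. -/
/-!
Factor `A = Sᴴ S` with `S` invertible and write `B = Sᴴ M S`; then `M` is positive definite,
`M ≠ 1`, and `t A + (1 - t) B = Sᴴ (t + (1 - t) M) S`, so after cancelling `log det A` the claim
becomes `(1 - t) log det M < log det (t + (1 - t) M)`. In an eigenbasis of `M` this is the sum over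
the eigenvalues `μᵢ` of `(1 - t) log μᵢ ≤ log (t + (1 - t) μᵢ)`, the concavity of `log` between
`1` and `μᵢ`, and it is strict because some `μᵢ ≠ 1`.
-/

open Matrix

lemma Real.sum_mul_log_lt_sum_log_add_mul {ι : Type*} [Fintype ι] {μ : ι → ℝ} {t : ℝ}
    (hμ : ∀ i, 0 < μ i) (hne : ∃ i, μ i ≠ 1) (ht0 : 0 < t) (ht1 : t < 1) :
    ∑ i, (1 - t) * log (μ i) < ∑ i, log (t + (1 - t) * μ i) := by
  have key : ∀ i, μ i ≠ 1 → (1 - t) * log (μ i) < log (t + (1 - t) * μ i) := fun i hi => by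
    simpa using strictConcaveOn_log_Ioi.2 (Set.mem_Ioi.2 one_pos) (Set.mem_Ioi.2 (hμ i))
      (Ne.symm hi) ht0 (sub_pos.2 ht1) (add_sub_cancel t 1)
  obtain ⟨i₀, hi₀⟩ := hne
  refine Finset.sum_lt_sum (fun i _ => ?_) ⟨i₀, Finset.mem_univ _, key i₀ hi₀⟩
  rcases eq_or_ne (μ i) 1 with h | h
  · simp [h]
  · exact (key i h).le

namespace Matrix

variable {𝕜 n : Type*} [RCLike 𝕜] [Fintype n] [DecidableEq n]

open scoped ComplexOrder

lemma IsHermitian.det_cfc {A : Matrix n n 𝕜} (hA : A.IsHermitian) (f : ℝ → ℝ) :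
    (cfc f A).det = ∏ i, (f (hA.eigenvalues i) : 𝕜) := by
  rw [hA.cfc_eq, IsHermitian.cfc]
  simp [-Unitary.conjStarAlgAut_apply]

lemma IsHermitian.exists_eigenvalues_ne_one {A : Matrix n n 𝕜} (hA : A.IsHermitian)
    (h : A ≠ 1) : ∃ i, hA.eigenvalues i ≠ 1 := by
  contrapose! h
  refine CFC.eq_one_of_spectrum_subset_one (R := ℝ) A ?_ hA.isSelfAdjoint
  rw [hA.spectrum_real_eq_range_eigenvalues]
  rintro _ ⟨i, rfl⟩
  exact h i

open scoped MatrixOrder in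
lemma PosDef.exists_eq_star_mul_self_and_eq_star_mul_mul {A B : Matrix n n 𝕜} (hA : A.PosDef)
    (hB : B.PosDef) :
    ∃ S M : Matrix n n 𝕜, IsUnit S ∧ M.PosDef ∧ A = star S * S ∧ B = star S * M * S := by
  obtain ⟨S, hS, rfl⟩ :=
    CStarAlgebra.isStrictlyPositive_iff_eq_star_mul_self.mp hA.isStrictlyPositive
  have hSdet : IsUnit S.det := (isUnit_iff_isUnit_det S).mp hS
  refine ⟨S, star S⁻¹ * B * S⁻¹, hS,
    (isUnit_nonsing_inv_iff.mpr hS).posDef_star_left_conjugate_iff.mpr hB, rfl, ?_⟩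
  rw [← mul_assoc, ← mul_assoc, ← star_mul, nonsing_inv_mul S hSdet, star_one, one_mul,
    mul_assoc, nonsing_inv_mul S hSdet, mul_one]

lemma PosDef.mul_log_det_lt_log_det_smul_one_add_smul {M : Matrix n n ℝ} (hM : M.PosDef)
    (hM1 : M ≠ 1) {t : ℝ} (ht0 : 0 < t) (ht1 : t < 1) :
    (1 - t) * Real.log M.det < Real.log (t • 1 + (1 - t) • M).det := by
  have hcfc : t • 1 + (1 - t) • M = cfc (fun x => t + (1 - t) * x) M := by
    rw [cfc_const_add t _ M (by fun_prop) hM.1.isSelfAdjoint,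
      cfc_const_mul_id (1 - t) M hM.1.isSelfAdjoint, Algebra.algebraMap_eq_smul_one]
  have hpos : ∀ i, 0 < t + (1 - t) * hM.1.eigenvalues i := fun i =>
    add_pos_of_pos_of_nonneg ht0 (mul_nonneg (sub_pos.2 ht1).le (hM.eigenvalues_pos i).le)
  rw [hcfc, hM.1.det_cfc, hM.1.det_eq_prod_eigenvalues]
  simp only [RCLike.ofReal_real_eq_id, id]
  rw [Real.log_prod fun i _ => (hpos i).ne', Real.log_prod fun i _ => (hM.eigenvalues_pos i).ne',
    Finset.mul_sum]
  exact Real.sum_mul_log_lt_sum_log_add_mul hM.eigenvalues_pos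
    (hM.1.exists_eigenvalues_ne_one hM1) ht0 ht1

lemma log_det_star_mul_mul {S X : Matrix n n ℝ} (hS : S.det ≠ 0) (hX : X.det ≠ 0) :
    Real.log (star S * X * S).det = Real.log (star S * S).det + Real.log X.det := by
  have hS' : (star S).det ≠ 0 := by rwa [star_eq_conjTranspose, det_conjTranspose]
  rw [det_mul, det_mul, det_mul, mul_right_comm, Real.log_mul (mul_ne_zero hS' hS) hX]

end Matrix

/-- The function A ↦ −log det A is strictly convex on real symmetric positive
    definite matrices. -/
theorem neg_log_det_strictConvex {n : ℕ}
    (A B : Matrix (Fin n) (Fin n) ℝ) (hA : A.PosDef) (hB : B.PosDef)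
    (hAB : A ≠ B) (t : ℝ) (ht0 : 0 < t) (ht1 : t < 1) :
    -Real.log (t • A + (1 - t) • B).det <
      -(t * Real.log A.det) - (1 - t) * Real.log B.det := by
  obtain ⟨S, M, hS, hM, rfl, rfl⟩ := hA.exists_eq_star_mul_self_and_eq_star_mul_mul hB
  have hM1 : M ≠ 1 := fun h => hAB (by rw [h, mul_one])
  have hmix : t • (star S * S) + (1 - t) • (star S * M * S) =
      star S * (t • 1 + (1 - t) • M) * S := by
    rw [mul_add, add_mul, mul_smul_comm, smul_mul_assoc, mul_one, mul_smul_comm, smul_mul_assoc]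
  have hSdet : S.det ≠ 0 := ((isUnit_iff_isUnit_det S).mp hS).ne_zero
  have hmix_posDef : (t • 1 + (1 - t) • M).PosDef :=
    (PosDef.one.smul ht0).add_posSemidef (hM.posSemidef.smul (sub_pos.2 ht1).le)
  rw [hmix, log_det_star_mul_mul hSdet hM.det_pos.ne',
    log_det_star_mul_mul hSdet hmix_posDef.det_pos.ne']
  linarith [hM.mul_log_det_lt_log_det_smul_one_add_smul hM1 ht0 ht1]
end

section
/- Let (n₁, n₂, n₃) be an orthonormal basis of ℝ³ with s₁ = n₁⊗n₁ − I/3, s₂ = n₂⊗n₂ − n₃⊗n₃, s₃ = (n₁⊗n₂+n₂⊗n₁)/2, s₄ = (n₁⊗n₃+n₃⊗n₁)/2, s₅ = (n₂⊗n₃+n₃⊗n₂)/2. Then for all i,j,k,l: 2δ_{ij}δ_{kl} − 3δ_{ik}δ_{jl} − 3δ_{il}δ_{jk} = −9(s₁⊗s₁)_{ijkl} − 3(s₂⊗s₂)_{ijkl} − 12(s₃⊗s₃ + s₄⊗s₄ + s₅⊗s₅)_{ijkl}, where (A⊗B)_{ijkl} = A_{ij}B_{kl}. -/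
open Matrix

/-- The Kronecker delta. -/
def kron (i j : Fin 3) : ℝ := if i = j then 1 else 0

/-- Expansion of the isotropic fourth-order tensor 2δδ − 3δδ − 3δδ in the basis
    s₁,...,s₅ generated by an orthonormal frame. -/
theorem isotropic_tensor_expansion (n₁ n₂ n₃ : Fin 3 → ℝ)
    (h : ∀ a b : Fin 3, (![n₁, n₂, n₃] a) ⬝ᵥ (![n₁, n₂, n₃] b) = if a = b then 1 else 0)
    (s₁ s₂ s₃ s₄ s₅ : Matrix (Fin 3) (Fin 3) ℝ)
    (hs₁ : s₁ = vecMulVec n₁ n₁ - (3:ℝ)⁻¹ • (1 : Matrix (Fin 3) (Fin 3) ℝ))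
    (hs₂ : s₂ = vecMulVec n₂ n₂ - vecMulVec n₃ n₃)
    (hs₃ : s₃ = (2:ℝ)⁻¹ • (vecMulVec n₁ n₂ + vecMulVec n₂ n₁))
    (hs₄ : s₄ = (2:ℝ)⁻¹ • (vecMulVec n₁ n₃ + vecMulVec n₃ n₁))
    (hs₅ : s₅ = (2:ℝ)⁻¹ • (vecMulVec n₂ n₃ + vecMulVec n₃ n₂)) :
    ∀ i j k l : Fin 3,
      2 * kron i j * kron k l - 3 * kron i k * kron j l - 3 * kron i l * kron j k
        = -9 * (s₁ i j * s₁ k l) - 3 * (s₂ i j * s₂ k l)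
          - 12 * (s₃ i j * s₃ k l + s₄ i j * s₄ k l + s₅ i j * s₅ k l) := by
  -- the matrix whose rows are n₁, n₂, n₃
  set M : Matrix (Fin 3) (Fin 3) ℝ := Matrix.of (fun a i => ![n₁, n₂, n₃] a i) with hMdef
  have hM : M * Mᵀ = 1 := by
    ext a b
    simpa [hMdef, Matrix.mul_apply, Matrix.one_apply, dotProduct] using h a b
  have hM' : Mᵀ * M = 1 := mul_eq_one_comm.mp hM
  -- completeness relation
  have key : ∀ i j : Fin 3, (if i = j then (1:ℝ) else 0)
      = n₁ i * n₁ j + n₂ i * n₂ j + n₃ i * n₃ j := by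
    intro i j
    have := congrFun (congrFun hM' i) j
    simp only [Matrix.mul_apply, Matrix.transpose_apply, Matrix.one_apply,
      Fin.sum_univ_three, hMdef, Matrix.of_apply] at this
    simp only [Matrix.cons_val_zero, Matrix.cons_val_one, Matrix.head_cons,
      Matrix.cons_val_two, Matrix.tail_cons] at this
    linarith [this]
  intro i j k l
  simp only [kron, hs₁, hs₂, hs₃, hs₄, hs₅, Matrix.sub_apply, Matrix.add_apply,
    Matrix.smul_apply, Matrix.one_apply, vecMulVec_apply, smul_eq_mul]
  simp only [key]
  ring
end

section
/- Let n₂ : U → ℝ³ be a twice continuously differentiable unit vector field on an open set U ⊆ ℝ³ which is part of a C² orthonormal frame field (n₁,n₂,n₃), and define D₁₁ = n₁ᵢ n₂ⱼ ∂ᵢ n₃ⱼ, D₃₃ = n₃ᵢ n₁ⱼ ∂ᵢ n₂ⱼ, D₃₁ = n₃ᵢ n₂ⱼ ∂ᵢ n₃ⱼ, D₁₃ = n₁ᵢ n₁ⱼ ∂ᵢ n₂ⱼ (with summation over repeated indices). Then ∂ᵢ n₂ᵢ ∂ⱼ n₂ⱼ − ∂ᵢ n₂ⱼ ∂ⱼ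 n₂ᵢ = 2(D₃₃D₁₁ − D₃₁D₁₃). -/
/-! With `N` the matrix whose rows are the frame vectors and `G` the gradient `Gᵢⱼ = ∂ᵢ n₂ⱼ`,
the left-hand side is `(tr G)² - tr (G²)`, which is invariant under the orthogonal conjugation
`G ↦ P = N G Nᵀ`; the entries `P_{λρ} = n_λᵢ n_ρⱼ ∂ᵢ n₂ⱼ` are frame invariants `D`. Differentiating
`n_μ · n_ν = δ_μν` shows `P_{λ2} = 0` and `P_{λ3} = -Q_{λ2}`, where `Q = N (∂ᵢ n₃ⱼ) Nᵀ`, and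
expanding `(tr P)² - tr (P²)` for a `P` with vanishing second column gives the right-hand side. -/

open Matrix

/-- The partial derivative ∂ᵢ of the j-th component of the μ-th frame vector at x. -/
noncomputable def pder (n : Fin 3 → (Fin 3 → ℝ) → (Fin 3 → ℝ)) (x : Fin 3 → ℝ)
    (i μ j : Fin 3) : ℝ :=
  fderiv ℝ (fun y => n μ y j) x (Pi.single i (1:ℝ))

open Filter Topology

theorem sum_mul_fderiv_add_eq_zero_of_eventuallyEq {E ι : Type*} [NormedAddCommGroup E]
    [NormedSpace ℝ E] [Fintype ι] {u w : E → ι → ℝ} {x : E} {c : ℝ}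
    (hu : ∀ j, DifferentiableAt ℝ (fun y => u y j) x)
    (hw : ∀ j, DifferentiableAt ℝ (fun y => w y j) x)
    (hc : (fun y => ∑ j, u y j * w y j) =ᶠ[𝓝 x] fun _ => c) (v : E) :
    ∑ j, (u x j * fderiv ℝ (fun y => w y j) x v + w x j * fderiv ℝ (fun y => u y j) x v)
      = 0 := by
  have hder := HasFDerivAt.fun_sum fun j (_ : j ∈ Finset.univ) =>
    (hu j).hasFDerivAt.mul (hw j).hasFDerivAt
  have hzero := hder.unique ((hasFDerivAt_const c x).congr_of_eventuallyEq hc)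
  simpa using congrArg (· v) hzero

namespace Matrix

section Transpose

variable {m R : Type*} [Fintype m] [CommRing R]

theorem mul_mul_transpose_apply (N M : Matrix m m R) (l ρ : m) :
    (N * M * Nᵀ) l ρ = ∑ i, ∑ j, N l i * N ρ j * M i j := by
  simp only [mul_apply, transpose_apply, Finset.sum_mul]
  rw [Finset.sum_comm]
  exact Finset.sum_congr rfl fun i _ => Finset.sum_congr rfl fun j _ => by ring

variable [DecidableEq m] {N : Matrix m m R}

theorem trace_mul_mul_transpose_of_transpose_mul_self (h : Nᵀ * N = 1) (M : Matrix m m R) :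
    trace (N * M * Nᵀ) = trace M := by
  rw [trace_mul_cycle, h, one_mul]

theorem mul_mul_transpose_mul_mul_mul_transpose (h : Nᵀ * N = 1)
    (M M' : Matrix m m R) : N * M * Nᵀ * (N * M' * Nᵀ) = N * (M * M') * Nᵀ := by
  simp only [mul_assoc]
  rw [← mul_assoc Nᵀ, h, one_mul]

end Transpose

theorem trace_mul_trace_sub_trace_mul_self_of_col_one_eq_zero {R : Type*} [CommRing R]
    (P : Matrix (Fin 3) (Fin 3) R) (h : ∀ l, P l 1 = 0) :
    trace P * trace P - trace (P * P) = 2 * (P 0 0 * P 2 2 - P 0 2 * P 2 0) := by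
  simp only [trace, diag_apply, mul_apply, Fin.sum_univ_three, h]
  ring

end Matrix

section Frame

variable (n : Fin 3 → (Fin 3 → ℝ) → (Fin 3 → ℝ)) (x : Fin 3 → ℝ)

def frameMatrix : Matrix (Fin 3) (Fin 3) ℝ :=
  of fun μ j => n μ x j

noncomputable def gradMatrix (μ : Fin 3) : Matrix (Fin 3) (Fin 3) ℝ :=
  of fun i j => pder n x i μ j

variable {n x}

theorem frameMatrix_transpose_mul_self
    (horth : ∀ μ ν, ∑ j, n μ x j * n ν x j = if μ = ν then 1 else 0) :
    (frameMatrix n x)ᵀ * frameMatrix n x = 1 := by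
  refine mul_eq_one_comm.mp (ext fun μ ν => ?_)
  simpa [frameMatrix, mul_apply, one_apply] using horth μ ν

theorem frameMatrix_conj_gradMatrix_skew
    (hdiff : ∀ μ j, DifferentiableAt ℝ (fun y => n μ y j) x)
    (horth : ∀ᶠ y in 𝓝 x, ∀ μ ν, ∑ j, n μ y j * n ν y j = if μ = ν then 1 else 0)
    (l μ ν : Fin 3) :
    (frameMatrix n x * gradMatrix n x ν * (frameMatrix n x)ᵀ) l μ
      + (frameMatrix n x * gradMatrix n x μ * (frameMatrix n x)ᵀ) l ν = 0 := by
  have hderiv : ∀ i, ∑ j, (n μ x j * pder n x i ν j + n ν x j * pder n x i μ j) = 0 :=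
    fun i => sum_mul_fderiv_add_eq_zero_of_eventuallyEq (hdiff μ) (hdiff ν)
      (horth.mono fun y hy => hy μ ν) _
  simp only [mul_mul_transpose_apply, frameMatrix, gradMatrix, of_apply,
    ← Finset.sum_add_distrib]
  refine Finset.sum_eq_zero fun i _ => ?_
  rw [← mul_eq_zero_of_right (n l x i) (hderiv i), Finset.mul_sum]
  exact Finset.sum_congr rfl fun j _ => by ring

end Frame

theorem surface_term_identity_general (U : Set (Fin 3 → ℝ)) (hU : IsOpen U)
    (n : Fin 3 → (Fin 3 → ℝ) → (Fin 3 → ℝ))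
    (horth : ∀ y ∈ U, ∀ μ ν : Fin 3,
      (∑ j : Fin 3, n μ y j * n ν y j) = if μ = ν then 1 else 0)
    (hsmooth : ∀ μ j : Fin 3, ContDiffOn ℝ 2 (fun y => n μ y j) U)
    (x : Fin 3 → ℝ) (hx : x ∈ U) :
    (∑ i : Fin 3, pder n x i 1 i) * (∑ j : Fin 3, pder n x j 1 j)
      - ∑ i : Fin 3, ∑ j : Fin 3, pder n x i 1 j * pder n x j 1 i
    = 2 * ((∑ i : Fin 3, ∑ j : Fin 3, n 2 x i * n 0 x j * pder n x i 1 j)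
            * (∑ i : Fin 3, ∑ j : Fin 3, n 0 x i * n 1 x j * pder n x i 2 j)
          - (∑ i : Fin 3, ∑ j : Fin 3, n 2 x i * n 1 x j * pder n x i 2 j)
            * (∑ i : Fin 3, ∑ j : Fin 3, n 0 x i * n 0 x j * pder n x i 1 j)) := by
  have hdiff : ∀ μ j, DifferentiableAt ℝ (fun y => n μ y j) x := fun μ j =>
    ((hsmooth μ j).differentiableOn (by norm_num)).differentiableAt (hU.mem_nhds hx)
  have hskew := frameMatrix_conj_gradMatrix_skew hdiff
    (eventually_of_mem (hU.mem_nhds hx) horth)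
  have hN := frameMatrix_transpose_mul_self (horth x hx)
  set N := frameMatrix n x
  set G := gradMatrix n x 1
  have hcol₂ : ∀ l, (N * G * Nᵀ) l 1 = 0 := fun l => by linarith [hskew l 1 1]
  have hcol₃ : ∀ l, (N * G * Nᵀ) l 2 = -(N * gradMatrix n x 2 * Nᵀ) l 1 :=
    fun l => by linarith [hskew l 1 2]
  have hlhs := trace_mul_trace_sub_trace_mul_self_of_col_one_eq_zero _ hcol₂
  rw [mul_mul_transpose_mul_mul_mul_transpose hN,
    trace_mul_mul_transpose_of_transpose_mul_self hN,
    trace_mul_mul_transpose_of_transpose_mul_self hN, hcol₃, hcol₃] at hlhs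
  simp only [mul_mul_transpose_apply] at hlhs
  simp only [trace, diag_apply, mul_apply, N, G, frameMatrix, gradMatrix,
    of_apply] at hlhs
  linear_combination hlhs

/-- The surface term identity
    ∂ᵢn₂ᵢ∂ⱼn₂ⱼ − ∂ᵢn₂ⱼ∂ⱼn₂ᵢ = 2(D₃₃D₁₁ − D₃₁D₁₃)
    for a C² right-handed orthonormal frame field (n₁,n₂,n₃). -/
theorem surface_term_identity (U : Set (Fin 3 → ℝ)) (hU : IsOpen U)
    (n : Fin 3 → (Fin 3 → ℝ) → (Fin 3 → ℝ))
    (horth : ∀ y ∈ U, ∀ μ ν : Fin 3,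
      (∑ j : Fin 3, n μ y j * n ν y j) = if μ = ν then 1 else 0)
    (hright : ∀ y ∈ U, (Matrix.of fun i j : Fin 3 => n i y j).det = 1)
    (hsmooth : ∀ μ j : Fin 3, ContDiffOn ℝ 2 (fun y => n μ y j) U)
    (x : Fin 3 → ℝ) (hx : x ∈ U) :
    (∑ i : Fin 3, pder n x i 1 i) * (∑ j : Fin 3, pder n x j 1 j)
      - ∑ i : Fin 3, ∑ j : Fin 3, pder n x i 1 j * pder n x j 1 i
    = 2 * ((∑ i : Fin 3, ∑ j : Fin 3, n 2 x i * n 0 x j * pder n x i 1 j)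
            * (∑ i : Fin 3, ∑ j : Fin 3, n 0 x i * n 1 x j * pder n x i 2 j)
          - (∑ i : Fin 3, ∑ j : Fin 3, n 2 x i * n 1 x j * pder n x i 2 j)
            * (∑ i : Fin 3, ∑ j : Fin 3, n 0 x i * n 0 x j * pder n x i 1 j)) :=
  surface_term_identity_general U hU n horth hsmooth x hx
end
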